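/- arXiv:2104.01529 — 5 statements merged into one kernel-verified Lean document; each statement's English description precedes it below -/
import Mathlib

section
/- Let $0 < r < 1$, $k \ge 3$ an integer, and $u \in C[0,1]$ with discrete Besov seminorm $[[u]]^2_{\Lambda} = \sum_{m=0}^{\infty} r^{-m} \sum_{l=0}^{k^m-1}(u(l/k^m) - u((l+1)/k^m))^2 < \infty$. Suppose $u$ is supported in an interval of length at most $k^{-M}$ for some $M \ge 1$. Then there exists a constant $C > 0$ depending only on $r$ (not on $u$, $M$) such that $[[u]]^2_{\Lambda} \le C \cdot \sum_{i=1}^{k^M} [[u]]^2_{\Lambda([\frac{i-1}{k^M}, \frac{i}{k^M}])}$, where $[[u]]_{\Lambda(I)}$ denotes the appropriately scaled Besov seminorm of $u$ restricted to subinterval $I$. -/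
/-- The squared discrete Besov seminorm of `u` on `[0,1]`, with weight `r⁻ᵐ` at level `m`. -/
noncomputable def besovSq (r : ℝ) (k : ℕ) (u : ℝ → ℝ) : ℝ :=
  ∑' m : ℕ, (1 / r) ^ m * ∑ l ∈ Finset.range (k ^ m),
    (u ((l : ℝ) / (k : ℝ) ^ m) - u (((l : ℝ) + 1) / (k : ℝ) ^ m)) ^ 2

/-- The appropriately scaled squared Besov seminorm of `u` on the subinterval
`[(i-1)/k^M, i/k^M]`. -/
noncomputable def besovLocSq (r : ℝ) (k M i : ℕ) (u : ℝ → ℝ) : ℝ :=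
  ∑' m : ℕ, (1 / r) ^ (M + m) * ∑ l ∈ Finset.range (k ^ m),
    (u (((i : ℝ) - 1) / (k : ℝ) ^ M + (l : ℝ) / (k : ℝ) ^ (M + m)) -
      u (((i : ℝ) - 1) / (k : ℝ) ^ M + ((l : ℝ) + 1) / (k : ℝ) ^ (M + m))) ^ 2

/-!
Summing the local seminorms over the `k^M` subintervals reproduces exactly the levels `m ≥ M` of
the global seminorm, so only the coarse levels `m < M` remain. The level-0 term of the local
seminorm on `[j/k^M, (j+1)/k^M]` is `r⁻ᴹ (u(j/k^M) - u((j+1)/k^M))²`. Since the support has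
length `k^{-M}`, a level-`M` grid value of `u` telescopes in two steps to a zero, which bounds it by
`4 rᴹ S`, with `S` the sum of the local seminorms. At a level `m < M` at most one grid point lies in
the support, so the level-`m` sum is at most `8 rᴹ S`, and the weights `r⁻ᵐ rᴹ` sum to at most
`(1 - r)⁻¹`.
-/

open Finset

section Sequences

variable {f : ℕ → ℝ} {D : ℝ}

lemma sq_le_four_mul_of_sq_sub_succ_le {N : ℕ} {B : ℝ} (hN : 3 ≤ N) (hD : D < 2)
    (hloc : ∀ i ≤ N, ∀ j ≤ N, f i ≠ 0 → f j ≠ 0 → |(i : ℝ) - j| ≤ D)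
    (hdiff : ∀ j < N, (f j - f (j + 1)) ^ 2 ≤ B) {j : ℕ} (hj : j ≤ N) :
    f j ^ 2 ≤ 4 * B := by
  have hB : 0 ≤ B := (sq_nonneg _).trans (hdiff 0 (by omega))
  by_cases hfj : f j = 0
  · simp [hfj, hB]
  have hfar : ∀ i ≤ N, (i : ℝ) = j + 2 ∨ (j : ℝ) = i + 2 → f i = 0 := by
    intro i hi hij
    by_contra hfi
    have := hloc i hi j hj hfi hfj
    rcases hij with h | h <;> rw [h] at this <;> norm_num [abs_of_nonneg, abs_of_nonpos] at this <;>
      linarith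
  rcases le_or_gt (j + 2) N with hjN | hjN
  · have h0 := hfar (j + 2) hjN (by push_cast; left; ring)
    have h1 := hdiff j (by omega)
    have h2 := hdiff (j + 1) (by omega)
    rw [show j + 1 + 1 = j + 2 by ring, h0] at h2
    nlinarith [sq_nonneg (f j - 2 * f (j + 1))]
  · obtain ⟨p, rfl⟩ : ∃ p, j = p + 2 := ⟨j - 2, by omega⟩
    have h0 := hfar p (by omega) (by push_cast; right; ring)
    have h1 := hdiff p (by omega)
    have h2 := hdiff (p + 1) (by omega)
    rw [h0] at h1
    nlinarith [sq_nonneg (f (p + 2) - 2 * f (p + 1))]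

lemma sum_sq_sub_succ_le_two_mul {n : ℕ} {A : ℝ} (hD : D < 1)
    (hloc : ∀ i ≤ n, ∀ j ≤ n, f i ≠ 0 → f j ≠ 0 → |(i : ℝ) - j| ≤ D)
    (hA : ∀ j ≤ n, f j ^ 2 ≤ A) :
    ∑ l ∈ range n, (f l - f (l + 1)) ^ 2 ≤ 2 * A := by
  have hprod : ∀ l < n, f l * f (l + 1) = 0 := by
    intro l hl
    by_contra h
    have := hloc l hl.le (l + 1) hl (left_ne_zero_of_mul h) (right_ne_zero_of_mul h)
    norm_num at this
    linarith
  have htotal : ∑ l ∈ range (n + 1), f l ^ 2 ≤ A := by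
    by_cases hex : ∃ p ≤ n, f p ≠ 0
    · obtain ⟨p, hp, hfp⟩ := hex
      rw [sum_eq_single_of_mem p (mem_range.2 (by omega)) fun l hl hlp => ?_]
      · exact hA p hp
      by_contra hfl
      have := hloc l (by simpa [Nat.lt_succ_iff] using hl) p hp (by simpa using hfl) hfp
      have : (1 : ℝ) ≤ |(l : ℝ) - p| := by
        exact_mod_cast Int.one_le_abs (sub_ne_zero.2 (Nat.cast_injective.ne hlp : (l : ℤ) ≠ p))
      linarith
    · push Not at hex
      rw [sum_eq_zero fun l hl => by rw [hex l (by simpa [Nat.lt_succ_iff] using hl)]; ring]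
      exact (sq_nonneg _).trans (hA 0 (Nat.zero_le n))
  calc ∑ l ∈ range n, (f l - f (l + 1)) ^ 2
      = ∑ l ∈ range n, f l ^ 2 + ∑ l ∈ range n, f (l + 1) ^ 2 := by
        rw [← sum_add_distrib]
        refine sum_congr rfl fun l hl => ?_
        linear_combination (-2) * hprod l (mem_range.1 hl)
    _ ≤ ∑ l ∈ range (n + 1), f l ^ 2 + ∑ l ∈ range (n + 1), f l ^ 2 := by
        refine add_le_add (sum_le_sum_of_subset_of_nonneg (range_subset_range.2 n.le_succ)
          fun _ _ _ => sq_nonneg _) ?_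
        rw [sum_range_succ' (fun l => f l ^ 2)]
        exact le_add_of_nonneg_right (sq_nonneg _)
    _ ≤ 2 * A := by linarith

end Sequences

lemma sum_range_pow_sub_le {r : ℝ} (hr0 : 0 ≤ r) (hr1 : r < 1) (M : ℕ) :
    ∑ m ∈ range M, r ^ (M - m) ≤ (1 - r)⁻¹ :=
  calc ∑ m ∈ range M, r ^ (M - m)
      ≤ ∑ m ∈ range M, r ^ (M - 1 - m) :=
        sum_le_sum fun m _ => pow_le_pow_of_le_one hr0 hr1.le (by omega)
    _ = ∑ m ∈ range M, r ^ m := sum_range_reflect (r ^ ·) M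
    _ ≤ (1 - r)⁻¹ := by
        rw [range_eq_Ico]
        exact (geom_sum_Ico_le_of_lt_one hr0 hr1).trans_eq (by simp)

lemma sum_range_mul_eq_sum_sum {α : Type*} [AddCommMonoid α] (f : ℕ → α) (a b : ℕ) :
    ∑ l ∈ range (a * b), f l = ∑ i ∈ range a, ∑ j ∈ range b, f (i * b + j) := by
  induction a with
  | zero => simp
  | succ n ih => rw [sum_range_succ, ← ih, Nat.succ_mul, sum_range_add]

lemma abs_sub_le_of_grid {u : ℝ → ℝ} {a h n : ℝ}
    (hsupp : ∀ x ∈ Set.Icc (0 : ℝ) 1, x ∉ Set.Icc a (a + h) → u x = 0) (hn : 0 < n)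
    {i j : ℕ} (hi : (i : ℝ) ≤ n) (hj : (j : ℝ) ≤ n) (hui : u (i / n) ≠ 0) (huj : u (j / n) ≠ 0) :
    |(i : ℝ) - j| ≤ n * h := by
  have hmem : ∀ l : ℕ, (l : ℝ) ≤ n → u (l / n) ≠ 0 → (l : ℝ) / n ∈ Set.Icc a (a + h) :=
    fun l hl hul => by_contra fun hout =>
      hul (hsupp _ ⟨by positivity, (div_le_one hn).2 hl⟩ hout)
  obtain ⟨hai, hia⟩ := hmem i hi hui
  obtain ⟨haj, hja⟩ := hmem j hj huj
  have : |(i : ℝ) / n - j / n| ≤ h := abs_sub_le_iff.2 ⟨by linarith, by linarith⟩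
  rwa [← sub_div, abs_div, abs_of_pos hn, div_le_iff₀ hn, mul_comm] at this

noncomputable def levelSq (k : ℕ) (u : ℝ → ℝ) (m : ℕ) : ℝ :=
  ∑ l ∈ range (k ^ m), (u ((l : ℝ) / (k : ℝ) ^ m) - u (((l : ℝ) + 1) / (k : ℝ) ^ m)) ^ 2

noncomputable def localLevelSq (k M : ℕ) (u : ℝ → ℝ) (i m : ℕ) : ℝ :=
  ∑ l ∈ range (k ^ m),
    (u (((i : ℝ) - 1) / (k : ℝ) ^ M + (l : ℝ) / (k : ℝ) ^ (M + m)) -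
      u (((i : ℝ) - 1) / (k : ℝ) ^ M + ((l : ℝ) + 1) / (k : ℝ) ^ (M + m))) ^ 2

section Besov

variable {r : ℝ} {k M : ℕ} {u : ℝ → ℝ}

lemma localLevelSq_nonneg (k M : ℕ) (u : ℝ → ℝ) (i m : ℕ) : 0 ≤ localLevelSq k M u i m :=
  sum_nonneg fun _ _ => sq_nonneg _

lemma besovLocSq_eq_tsum (r : ℝ) (k M i : ℕ) (u : ℝ → ℝ) :
    besovLocSq r k M i u = ∑' m, (1 / r) ^ (M + m) * localLevelSq k M u i m := rfl

lemma localLevelSq_succ_zero (k M : ℕ) (u : ℝ → ℝ) (j : ℕ) :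
    localLevelSq k M u (j + 1) 0 = (u (j / (k : ℝ) ^ M) - u ((j + 1) / (k : ℝ) ^ M)) ^ 2 := by
  simp only [localLevelSq, pow_zero, sum_range_one, add_zero, Nat.cast_zero,
    Nat.cast_succ, add_sub_cancel_right, zero_add, ← add_div]

lemma sum_localLevelSq (hk : k ≠ 0) (M : ℕ) (u : ℝ → ℝ) (m : ℕ) :
    ∑ i ∈ Icc 1 (k ^ M), localLevelSq k M u i m = levelSq k u (M + m) := by
  have hk' : (k : ℝ) ≠ 0 := Nat.cast_ne_zero.2 hk
  rw [← Ico_add_one_right_eq_Icc, sum_Ico_eq_sum_range, Nat.add_sub_cancel, levelSq, pow_add,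
    sum_range_mul_eq_sum_sum]
  refine sum_congr rfl fun i _ => sum_congr rfl fun j _ => ?_
  have hpt : ∀ x : ℝ, (i : ℝ) / (k : ℝ) ^ M + x / (k : ℝ) ^ (M + m)
      = ((i : ℝ) * (k : ℝ) ^ m + x) / (k : ℝ) ^ (M + m) := by
    intro x; rw [pow_add]; field_simp
  push_cast [add_sub_cancel_left]
  rw [hpt, hpt, add_assoc]

lemma summable_localLevelSq (hr : 0 < r) (hk : k ≠ 0)
    (hsum : Summable fun m => (1 / r) ^ m * levelSq k u m) {i : ℕ} (hi : i ∈ Icc 1 (k ^ M)) :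
    Summable fun m => (1 / r) ^ (M + m) * localLevelSq k M u i m := by
  have htail : Summable fun m => (1 / r) ^ (M + m) * levelSq k u (M + m) := by
    simpa only [add_comm M] using (summable_nat_add_iff M).2 hsum
  refine htail.of_nonneg_of_le (fun m => by positivity [localLevelSq_nonneg k M u i m])
    fun m => mul_le_mul_of_nonneg_left ?_ (by positivity)
  rw [← sum_localLevelSq hk M u m]
  exact single_le_sum (fun j _ => localLevelSq_nonneg k M u j m) hi

lemma besovLocSq_nonneg (hr : 0 ≤ r) (k M i : ℕ) (u : ℝ → ℝ) : 0 ≤ besovLocSq r k M i u :=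
  tsum_nonneg fun m => mul_nonneg (by positivity) (localLevelSq_nonneg k M u i m)

lemma besovSq_eq_sum_add_sum_besovLocSq (hr : 0 < r) (hk : k ≠ 0)
    (hsum : Summable fun m => (1 / r) ^ m * levelSq k u m) :
    besovSq r k u = ∑ m ∈ range M, (1 / r) ^ m * levelSq k u m
      + ∑ i ∈ Icc 1 (k ^ M), besovLocSq r k M i u := by
  have hloc : ∑ i ∈ Icc 1 (k ^ M), besovLocSq r k M i u
      = ∑' m, (1 / r) ^ (m + M) * levelSq k u (m + M) := by
    simp only [besovLocSq_eq_tsum]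
    rw [← Summable.tsum_finsetSum fun i hi => summable_localLevelSq hr hk hsum hi]
    refine tsum_congr fun m => ?_
    rw [← mul_sum, sum_localLevelSq hk, add_comm m]
  rw [hloc]
  exact (hsum.sum_add_tsum_nat_add M).symm

lemma sq_sub_le_mul_besovLocSq (hr : 0 < r) (hk : k ≠ 0)
    (hsum : Summable fun m => (1 / r) ^ m * levelSq k u m) {j : ℕ} (hj : j < k ^ M) :
    (u (j / (k : ℝ) ^ M) - u ((j + 1) / (k : ℝ) ^ M)) ^ 2
      ≤ r ^ M * ∑ i ∈ Icc 1 (k ^ M), besovLocSq r k M i u := by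
  have hi : j + 1 ∈ Icc 1 (k ^ M) := mem_Icc.2 ⟨by omega, hj⟩
  calc (u (j / (k : ℝ) ^ M) - u ((j + 1) / (k : ℝ) ^ M)) ^ 2
      = r ^ M * ((1 / r) ^ (M + 0) * localLevelSq k M u (j + 1) 0) := by
        rw [localLevelSq_succ_zero, add_zero, ← mul_assoc, one_div_pow,
          mul_one_div_cancel (pow_ne_zero M hr.ne'), one_mul]
    _ ≤ r ^ M * besovLocSq r k M (j + 1) u := by
        gcongr
        exact (summable_localLevelSq hr hk hsum hi).le_tsum 0
          fun m _ => mul_nonneg (by positivity) (localLevelSq_nonneg k M u _ m)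
    _ ≤ r ^ M * ∑ i ∈ Icc 1 (k ^ M), besovLocSq r k M i u := by
        gcongr
        exact single_le_sum (fun i _ => besovLocSq_nonneg hr.le k M i u) hi

end Besov

section Support

variable {r a : ℝ} {k M : ℕ} {u : ℝ → ℝ}

lemma sq_le_of_support (hr : 0 < r) (hk : 3 ≤ k) (hM : 1 ≤ M)
    (hsum : Summable fun m => (1 / r) ^ m * levelSq k u m)
    (hsupp : ∀ x ∈ Set.Icc (0 : ℝ) 1, x ∉ Set.Icc a (a + ((k : ℝ) ^ M)⁻¹) → u x = 0)
    {j : ℕ} (hj : j ≤ k ^ M) :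
    u (j / (k : ℝ) ^ M) ^ 2 ≤ 4 * (r ^ M * ∑ i ∈ Icc 1 (k ^ M), besovLocSq r k M i u) := by
  have hkM : (0 : ℝ) < (k : ℝ) ^ M := pow_pos (by exact_mod_cast (by omega : 0 < k)) M
  refine sq_le_four_mul_of_sq_sub_succ_le (f := fun l : ℕ => u (l / (k : ℝ) ^ M)) (D := 1)
    (le_trans hk (Nat.le_self_pow (by omega) k)) one_lt_two (fun i hi l hl hui hul => ?_)
    (fun l hl => ?_) hj
  · exact (abs_sub_le_of_grid hsupp hkM (by exact_mod_cast hi) (by exact_mod_cast hl) hui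
      hul).trans_eq (mul_inv_cancel₀ hkM.ne')
  · simpa using sq_sub_le_mul_besovLocSq hr (by omega) hsum hl

lemma levelSq_le_of_support (hr : 0 < r) (hk : 3 ≤ k) (hM : 1 ≤ M)
    (hsum : Summable fun m => (1 / r) ^ m * levelSq k u m)
    (hsupp : ∀ x ∈ Set.Icc (0 : ℝ) 1, x ∉ Set.Icc a (a + ((k : ℝ) ^ M)⁻¹) → u x = 0)
    {m : ℕ} (hm : m < M) :
    (1 / r) ^ m * levelSq k u m
      ≤ 8 * r ^ (M - m) * ∑ i ∈ Icc 1 (k ^ M), besovLocSq r k M i u := by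
  set S := ∑ i ∈ Icc 1 (k ^ M), besovLocSq r k M i u
  have hk1 : (1 : ℝ) < k := by exact_mod_cast (by omega : 1 < k)
  have hkm : (0 : ℝ) < (k : ℝ) ^ m := pow_pos (by linarith) m
  have hsplit : k ^ M = k ^ m * k ^ (M - m) := by rw [← pow_add, Nat.add_sub_cancel' hm.le]
  have hA : ∀ l ≤ k ^ m, u (l / (k : ℝ) ^ m) ^ 2 ≤ 4 * (r ^ M * S) := by
    intro l hl
    have hcoarse : (l : ℝ) / (k : ℝ) ^ m = ((l * k ^ (M - m) : ℕ) : ℝ) / (k : ℝ) ^ M := by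
      rw [← Nat.cast_pow, ← Nat.cast_pow, hsplit]
      push_cast
      field_simp
    rw [hcoarse]
    exact sq_le_of_support hr hk hM hsum hsupp (hsplit ▸ Nat.mul_le_mul_right _ hl)
  have hD : (k : ℝ) ^ m * ((k : ℝ) ^ M)⁻¹ < 1 := by
    rw [← div_eq_mul_inv, div_lt_one (by positivity)]
    exact pow_lt_pow_right₀ hk1 hm
  have hlevel : levelSq k u m ≤ 2 * (4 * (r ^ M * S)) := by
    have := sum_sq_sub_succ_le_two_mul (f := fun l : ℕ => u (l / (k : ℝ) ^ m)) hD
      (fun i hi l hl hui hul => abs_sub_le_of_grid hsupp hkm (by exact_mod_cast hi)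
        (by exact_mod_cast hl) hui hul) hA
    simpa [levelSq] using this
  calc (1 / r) ^ m * levelSq k u m ≤ (1 / r) ^ m * (2 * (4 * (r ^ M * S))) := by gcongr
    _ = 8 * r ^ (M - m) * S := by
        rw [pow_sub₀ r hr.ne' hm.le, one_div_pow]
        ring

end Support

/-- For functions with small support, the global Besov seminorm is controlled by
the sum of the localized seminorms at scale `k^{-M}`, with a constant
depending only on `r`. -/
theorem stmt_3 (r : ℝ) (hr0 : 0 < r) (hr1 : r < 1) (k : ℕ) (hk : 3 ≤ k) :
    ∃ C : ℝ, 0 < C ∧ ∀ M : ℕ, 1 ≤ M → ∀ u : ℝ → ℝ, Continuous u →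
      Summable (fun m : ℕ => (1 / r) ^ m * ∑ l ∈ Finset.range (k ^ m),
        (u ((l : ℝ) / (k : ℝ) ^ m) - u (((l : ℝ) + 1) / (k : ℝ) ^ m)) ^ 2) →
      (∃ a : ℝ, ∀ x ∈ Set.Icc (0:ℝ) 1, x ∉ Set.Icc a (a + ((k : ℝ) ^ M)⁻¹) → u x = 0) →
      besovSq r k u ≤ C * ∑ i ∈ Finset.Icc 1 (k ^ M), besovLocSq r k M i u := by
  refine ⟨8 * (1 - r)⁻¹ + 1, by have := sub_pos.2 hr1; positivity, ?_⟩
  intro M hM u _ hsum ⟨a, hsupp⟩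
  rw [besovSq_eq_sum_add_sum_besovLocSq (M := M) hr0 (by omega) hsum]
  have hhead := fun m (hm : m ∈ range M) =>
    levelSq_le_of_support hr0 hk hM hsum hsupp (mem_range.1 hm)
  have hS := sum_nonneg fun i (_ : i ∈ Icc 1 (k ^ M)) => besovLocSq_nonneg hr0.le k M i u
  generalize ∑ i ∈ Icc 1 (k ^ M), besovLocSq r k M i u = S at hhead hS ⊢
  calc ∑ m ∈ range M, (1 / r) ^ m * levelSq k u m + S
      ≤ ∑ m ∈ range M, 8 * r ^ (M - m) * S + S := add_le_add_left (sum_le_sum hhead) S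
    _ = 8 * (∑ m ∈ range M, r ^ (M - m)) * S + S := by rw [mul_sum, sum_mul]
    _ ≤ 8 * (1 - r)⁻¹ * S + S := by gcongr; exact sum_range_pow_sub_le hr0.le hr1 M
    _ = (8 * (1 - r)⁻¹ + 1) * S := by ring
end

section
/- Let $(X_n)$ be a sequence of compact subsets of a compact metric space $(B,d)$ converging to a compact set $X$ in the Hausdorff metric. Let $f_n \in C(X_n)$ be uniformly bounded and equicontinuous (in the sense that $\sup\{|f_n(x) - f_n(y)| : n \ge 1, x,y \in X_n, d(x,y) < \rho\} \to 0$ as $\rho \to 0$). Then there is a subsequence $(f_{n_l})$ and $f \in C(X)$ such that $f_{n_l} \rightarrowtail f$, meaning $f_{n_l}(x_l) \to f(x)$ whenever $x_l \in X_{n_l}$, $x_l \to x \in X$. -/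
open Filter

private lemma key_aa {B : Type*} [MetricSpace B] [CompactSpace B]
    (X : ℕ → Set B) (X₀ : Set B)
    (hXc : ∀ n, IsCompact (X n)) (hXne : ∀ n, (X n).Nonempty)
    (hX₀c : IsCompact X₀) (hX₀ne : X₀.Nonempty)
    (hconv : Tendsto (fun n => Metric.hausdorffDist (X n) X₀) atTop (nhds 0))
    (f : ℕ → B → ℝ)
    (hbdd : ∃ Mb : ℝ, ∀ n, ∀ x ∈ X n, |f n x| ≤ Mb)
    (hequi : ∀ ε > (0:ℝ), ∃ δ > (0:ℝ), ∀ n, ∀ x ∈ X n, ∀ y ∈ X n,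
      dist x y < δ → |f n x - f n y| < ε) :
    ∃ φ : ℕ → ℕ, StrictMono φ ∧ ∃ g : B → ℝ, ContinuousOn g X₀ ∧
      ∀ x ∈ X₀, ∀ z : ℕ → B, (∀ l, z l ∈ X (φ l)) →
        Tendsto z atTop (nhds x) →
        Tendsto (fun l => f (φ l) (z l)) atTop (nhds (g x)) := by
  obtain ⟨M, hM⟩ := hbdd
  set r : ℕ → ℝ := fun n => Metric.hausdorffDist (X n) X₀ with hr
  -- nearest point projections
  have hp : ∀ n, ∀ x : B, ∃ y ∈ X n, Metric.infDist x (X n) = dist x y :=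
    fun n x => (hXc n).exists_infDist_eq_dist (hXne n) x
  choose p hpmem hpdist using hp
  have hpx : ∀ n, ∀ x ∈ X₀, dist x (p n x) ≤ r n := by
    intro n x hx
    rw [← hpdist n x]
    calc Metric.infDist x (X n) ≤ Metric.hausdorffDist X₀ (X n) :=
          Metric.infDist_le_hausdorffDist_of_mem hx
            (Metric.hausdorffEdist_ne_top_of_nonempty_of_bounded hX₀ne (hXne n)
              hX₀c.isBounded (hXc n).isBounded)
      _ = r n := Metric.hausdorffDist_comm ..
  -- countable dense sequence in X₀
  haveI : CompactSpace X₀ := isCompact_iff_compactSpace.mp hX₀c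
  haveI : Nonempty X₀ := hX₀ne.to_subtype
  obtain ⟨u, hu⟩ := TopologicalSpace.exists_dense_seq X₀
  set d : ℕ → B := fun k => (u k : B) with hdd
  have hd : ∀ k, d k ∈ X₀ := fun k => (u k).2
  have hdense : ∀ x ∈ X₀, ∀ ρ > (0:ℝ), ∃ k, dist x (d k) < ρ := by
    intro x hx ρ hρ
    obtain ⟨k, hk⟩ := Metric.denseRange_iff.mp hu ⟨x, hx⟩ ρ hρ
    exact ⟨k, by simpa [Subtype.dist_eq] using hk⟩
  -- diagonal extraction via sequential compactness of the product
  set F : ℕ → ℕ → ℝ := fun n k => f n (p n (d k)) with hF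
  have hFmem : ∀ n, F n ∈ Set.univ.pi (fun _ : ℕ => Set.Icc (-M) M) := by
    intro n k _
    exact abs_le.mp (hM n _ (hpmem n (d k)))
  obtain ⟨g₀, -, φ, hφ, hφconv⟩ :=
    (isCompact_univ_pi (fun _ : ℕ => isCompact_Icc)).isSeqCompact hFmem
  have hg₀ : ∀ k, Tendsto (fun l => F (φ l) k) atTop (nhds (g₀ k)) :=
    fun k => tendsto_pi_nhds.mp hφconv k
  have hrφ : Tendsto (fun l => r (φ l)) atTop (nhds 0) :=
    hconv.comp hφ.tendsto_atTop
  -- eventual bounds on r (φ l)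
  have hrev : ∀ ρ > (0:ℝ), ∀ᶠ l in atTop, r (φ l) < ρ := by
    intro ρ hρ
    exact hrφ.eventually (eventually_lt_nhds hρ)
  -- key estimate: comparing values at x and at d k
  have hcomp : ∀ δ > (0:ℝ), ∀ ε > (0:ℝ),
      (∀ n, ∀ x ∈ X n, ∀ y ∈ X n, dist x y < δ → |f n x - f n y| < ε) →
      ∀ n, ∀ x ∈ X₀, ∀ k, dist x (d k) < δ/4 → r n < δ/4 →
        |f n (p n x) - F n k| < ε := by
    intro δ hδ ε hε hδf n x hx k hk hrn
    apply hδf n _ (hpmem n x) _ (hpmem n (d k))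
    calc dist (p n x) (p n (d k))
        ≤ dist (p n x) x + dist x (d k) + dist (d k) (p n (d k)) := dist_triangle4 _ _ _ _
      _ < δ/4 + δ/4 + δ/4 := by
          have h1 := hpx n x hx
          have h2 := hpx n (d k) (hd k)
          rw [dist_comm (p n x) x]
          have : dist x (p n x) < δ/4 := lt_of_le_of_lt h1 hrn
          have : dist (d k) (p n (d k)) < δ/4 := lt_of_le_of_lt h2 hrn
          linarith [lt_of_le_of_lt (hpx n x hx) hrn]
      _ < δ := by linarith
  -- pointwise Cauchy on X₀
  have hcauchy : ∀ x ∈ X₀, CauchySeq (fun l => f (φ l) (p (φ l) x)) := by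
    intro x hx
    rw [Metric.cauchySeq_iff]
    intro ε hε
    obtain ⟨δ, hδ, hδf⟩ := hequi (ε/4) (by linarith)
    obtain ⟨k, hk⟩ := hdense x hx (δ/4) (by linarith)
    obtain ⟨L₁, hL₁⟩ := Metric.cauchySeq_iff.mp (hg₀ k).cauchySeq (ε/4) (by linarith)
    obtain ⟨L₂, hL₂⟩ := eventually_atTop.mp (hrev (δ/4) (by linarith))
    refine ⟨max L₁ L₂, fun l hl m hm => ?_⟩
    have e1 := hcomp δ hδ (ε/4) (by linarith) hδf (φ l) x hx k hk
      (hL₂ l (le_trans (le_max_right _ _) hl))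
    have e2 := hcomp δ hδ (ε/4) (by linarith) hδf (φ m) x hx k hk
      (hL₂ m (le_trans (le_max_right _ _) hm))
    have e3 := hL₁ l (le_trans (le_max_left _ _) hl) m (le_trans (le_max_left _ _) hm)
    rw [Real.dist_eq] at e3 ⊢
    calc |f (φ l) (p (φ l) x) - f (φ m) (p (φ m) x)|
        ≤ |f (φ l) (p (φ l) x) - F (φ l) k| + |F (φ l) k - F (φ m) k|
            + |F (φ m) k - f (φ m) (p (φ m) x)| := by
          have := abs_sub_le (f (φ l) (p (φ l) x)) (F (φ l) k) (f (φ m) (p (φ m) x))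
          have := abs_sub_le (F (φ l) k) (F (φ m) k) (f (φ m) (p (φ m) x))
          linarith [abs_sub_le (f (φ l) (p (φ l) x)) (F (φ l) k) (f (φ m) (p (φ m) x)),
            abs_sub_le (F (φ l) k) (F (φ m) k) (f (φ m) (p (φ m) x))]
      _ < ε/4 + ε/4 + ε/4 := by
          rw [abs_sub_comm (F (φ m) k)] at *
          have e3' : |F (φ l) k - F (φ m) k| < ε/4 := e3
          linarith [e1, e2, e3']
      _ < ε := by linarith
  -- the limit function
  set g : B → ℝ := fun x => limUnder atTop (fun l => f (φ l) (p (φ l) x)) with hg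
  have hgx : ∀ x ∈ X₀, Tendsto (fun l => f (φ l) (p (φ l) x)) atTop (nhds (g x)) := by
    intro x hx
    obtain ⟨c, hc⟩ := cauchySeq_tendsto_of_complete (hcauchy x hx)
    have : g x = c := hc.limUnder_eq
    rwa [this]
  have hgd : ∀ k, g (d k) = g₀ k :=
    fun k => tendsto_nhds_unique (hgx (d k) (hd k)) (hg₀ k)
  -- uniform modulus of continuity for g on X₀
  have hmod : ∀ ε > (0:ℝ), ∃ δ > (0:ℝ), ∀ x ∈ X₀, ∀ y ∈ X₀,
      dist x y < δ → |g x - g y| ≤ ε := by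
    intro ε hε
    obtain ⟨δ, hδ, hδf⟩ := hequi ε hε
    refine ⟨δ/2, by linarith, fun x hx y hy hxy => ?_⟩
    have hev : ∀ᶠ l in atTop, |f (φ l) (p (φ l) x) - f (φ l) (p (φ l) y)| ≤ ε := by
      filter_upwards [hrev (δ/4) (by linarith)] with l hl
      have : dist (p (φ l) x) (p (φ l) y) < δ := by
        calc dist (p (φ l) x) (p (φ l) y)
            ≤ dist (p (φ l) x) x + dist x y + dist y (p (φ l) y) := dist_triangle4 _ _ _ _
          _ < δ/4 + δ/2 + δ/4 := by
              rw [dist_comm (p (φ l) x) x]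
              have h1 := lt_of_le_of_lt (hpx (φ l) x hx) hl
              have h2 := lt_of_le_of_lt (hpx (φ l) y hy) hl
              linarith
          _ = δ := by ring
      exact le_of_lt (hδf (φ l) _ (hpmem _ x) _ (hpmem _ y) this)
    exact le_of_tendsto (((hgx x hx).sub (hgx y hy)).abs) hev
  have hgc : ContinuousOn g X₀ := by
    rw [Metric.continuousOn_iff]
    intro x hx ε hε
    obtain ⟨δ, hδ, hδg⟩ := hmod (ε/2) (by linarith)
    refine ⟨δ, hδ, fun y hy hxy => ?_⟩
    rw [Real.dist_eq]
    exact lt_of_le_of_lt (hδg y hy x hx hxy) (by linarith)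
  refine ⟨φ, hφ, g, hgc, ?_⟩
  -- the convergence f (φ l) (z l) → g x
  intro x hx z hz hzx
  rw [Metric.tendsto_atTop]
  intro ε hε
  obtain ⟨δ, hδ, hδf⟩ := hequi (ε/4) (by linarith)
  obtain ⟨δ', hδ', hδ'g⟩ := hmod (ε/4) (by linarith)
  obtain ⟨k, hk⟩ := hdense x hx (min (δ/4) δ') (lt_min (by linarith) hδ')
  have hk1 : dist x (d k) < δ/4 := lt_of_lt_of_le hk (min_le_left _ _)
  have hk2 : dist x (d k) < δ' := lt_of_lt_of_le hk (min_le_right _ _)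
  have hterm3 : |g₀ k - g x| ≤ ε/4 := by
    rw [← hgd k]
    exact hδ'g (d k) (hd k) x hx (by rwa [dist_comm])
  have E1 : ∀ᶠ l in atTop, dist (z l) x < δ/4 :=
    hzx.eventually (Metric.ball_mem_nhds x (by linarith : (0:ℝ) < δ/4))
  have E2 : ∀ᶠ l in atTop, r (φ l) < δ/4 := hrev (δ/4) (by linarith)
  have E3 : ∀ᶠ l in atTop, |F (φ l) k - g₀ k| < ε/4 := by
    have := (hg₀ k).eventually (Metric.ball_mem_nhds (g₀ k) (by linarith : (0:ℝ) < ε/4))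
    filter_upwards [this] with l hl
    rwa [Real.dist_eq] at hl
  rw [← eventually_atTop]
  filter_upwards [E1, E2, E3] with l h1 h2 h3
  have hterm1 : |f (φ l) (z l) - F (φ l) k| < ε/4 := by
    apply hδf (φ l) _ (hz l) _ (hpmem _ (d k))
    calc dist (z l) (p (φ l) (d k))
        ≤ dist (z l) x + dist x (d k) + dist (d k) (p (φ l) (d k)) := dist_triangle4 _ _ _ _
      _ < δ/4 + δ/4 + δ/4 := by
          have := lt_of_le_of_lt (hpx (φ l) (d k) (hd k)) h2
          linarith
      _ < δ := by linarith
  rw [Real.dist_eq]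
  calc |f (φ l) (z l) - g x|
      ≤ |f (φ l) (z l) - F (φ l) k| + |F (φ l) k - g₀ k| + |g₀ k - g x| := by
        linarith [abs_sub_le (f (φ l) (z l)) (F (φ l) k) (g x),
          abs_sub_le (F (φ l) k) (g₀ k) (g x)]
    _ < ε/4 + ε/4 + ε/4 + ε/4 := by linarith
    _ ≤ ε := by linarith

/-- Arzelà–Ascoli across varying domains: a uniformly bounded, equicontinuous
sequence of functions on compact sets `Xₙ → X₀` (Hausdorff convergence) has a
subsequence converging to a continuous function on `X₀` in the sense `f_{n_l} ↣ f`. -/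
theorem stmt_12 {B : Type*} [MetricSpace B] [CompactSpace B]
    (X : ℕ → Set B) (X₀ : Set B)
    (hXc : ∀ n, IsCompact (X n)) (hX₀c : IsCompact X₀) (hX₀ne : X₀.Nonempty)
    (hconv : Tendsto (fun n => Metric.hausdorffDist (X n) X₀) atTop (nhds 0))
    (f : ℕ → B → ℝ)
    (hbdd : ∃ Mb : ℝ, ∀ n, ∀ x ∈ X n, |f n x| ≤ Mb)
    (hequi : ∀ ε > (0:ℝ), ∃ δ > (0:ℝ), ∀ n, ∀ x ∈ X n, ∀ y ∈ X n,
      dist x y < δ → |f n x - f n y| < ε) :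
    ∃ φ : ℕ → ℕ, StrictMono φ ∧ ∃ g : B → ℝ, ContinuousOn g X₀ ∧
      ∀ x ∈ X₀, ∀ z : ℕ → B, (∀ l, z l ∈ X (φ l)) →
        Tendsto z atTop (nhds x) →
        Tendsto (fun l => f (φ l) (z l)) atTop (nhds (g x)) := by
  by_cases hinf : {n | ¬ (X n).Nonempty}.Infinite
  · refine ⟨Nat.nth (· ∈ {n | ¬ (X n).Nonempty}), Nat.nth_strictMono hinf,
      fun _ => 0, continuousOn_const, ?_⟩
    intro x hx z hz hzx
    exact absurd ⟨z 0, hz 0⟩ (Nat.nth_mem_of_infinite hinf 0)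
  · rw [Set.not_infinite] at hinf
    obtain ⟨N, hN⟩ := hinf.bddAbove
    have hKne : ∀ n, (X (n + (N + 1))).Nonempty := by
      intro n
      by_contra h
      have : n + (N + 1) ≤ N := hN h
      omega
    set K := N + 1 with hK
    obtain ⟨ψ, hψ, g, hgc, hprop⟩ := key_aa (fun n => X (n + K)) X₀
      (fun n => hXc _) hKne hX₀c hX₀ne
      (hconv.comp (tendsto_add_atTop_nat K))
      (fun n => f (n + K))
      (hbdd.imp fun M hM n x hx => hM _ x hx)
      (fun ε hε => (hequi ε hε).imp fun δ hδ =>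
        ⟨hδ.1, fun n x hx y hy h => hδ.2 _ x hx y hy h⟩)
    refine ⟨fun l => ψ l + K, fun a b h => by
      simpa using Nat.add_lt_add_right (hψ h) K, g, hgc, ?_⟩
    intro x hx z hz hzx
    exact hprop x hx z (fun l => hz l) hzx
end

section
/- Let $(X_n)$ be compact subsets of a compact metric space $B$ with $X_n \to X$ in the Hausdorff metric, and let $f_n \in C(X_n)$, $f \in l(X)$ with $f_n \rightarrowtail f$ (i.e. $f_n(x_n) \to f(x)$ whenever $x_n \in X_n$, $x_n \to x \in X$). Then the family $(f_n)$ is uniformly bounded and equicontinuous, and $f$ is continuous on $X$. -/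
open Filter Metric

section aux
variable {B : Type*} [MetricSpace B] [CompactSpace B]

lemma aux_fin (s t : Set B) (hs : s.Nonempty) (ht : t.Nonempty) :
    EMetric.hausdorffEdist s t ≠ ⊤ :=
  Metric.hausdorffEdist_ne_top_of_nonempty_of_bounded hs ht
    (isCompact_univ.isBounded.subset (Set.subset_univ _))
    (isCompact_univ.isBounded.subset (Set.subset_univ _))

lemma aux_approx (X : ℕ → Set B) (X₀ : Set B)
    (hXc : ∀ n, IsCompact (X n)) (hXne : ∀ n, (X n).Nonempty) (hX₀ne : X₀.Nonempty)
    (hconv : Tendsto (fun n => Metric.hausdorffDist (X n) X₀) atTop (nhds 0))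
    {x : B} (hx : x ∈ X₀) :
    ∃ z : ℕ → B, (∀ n, z n ∈ X n) ∧ Tendsto z atTop (nhds x) := by
  have hz : ∀ n, ∃ y ∈ X n, infDist x (X n) = dist x y :=
    fun n => (hXc n).exists_infDist_eq_dist (hXne n) x
  choose z hz1 hz2 using hz
  refine ⟨z, hz1, ?_⟩
  rw [tendsto_iff_dist_tendsto_zero]
  refine squeeze_zero (fun n => dist_nonneg) (fun n => ?_) hconv
  rw [dist_comm, ← hz2 n]
  calc infDist x (X n) ≤ hausdorffDist X₀ (X n) :=
        infDist_le_hausdorffDist_of_mem hx (aux_fin X₀ (X n) hX₀ne (hXne n))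
    _ = hausdorffDist (X n) X₀ := hausdorffDist_comm

lemma aux_keyB (X : ℕ → Set B) (X₀ : Set B)
    (hXc : ∀ n, IsCompact (X n)) (hXne : ∀ n, (X n).Nonempty)
    (hX₀c : IsCompact X₀) (hX₀ne : X₀.Nonempty)
    (hconv : Tendsto (fun n => Metric.hausdorffDist (X n) X₀) atTop (nhds 0))
    (f : ℕ → B → ℝ) (g : B → ℝ)
    (hlim : ∀ x ∈ X₀, ∀ z : ℕ → B, (∀ n, z n ∈ X n) → Tendsto z atTop (nhds x) →
      Tendsto (fun n => f n (z n)) atTop (nhds (g x)))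
    (ν : ℕ → ℕ) (hν : StrictMono ν) (z : ℕ → B) (hz : ∀ k, z k ∈ X (ν k))
    {x : B} (hzx : Tendsto z atTop (nhds x)) :
    x ∈ X₀ ∧ Tendsto (fun k => f (ν k) (z k)) atTop (nhds (g x)) := by
  classical
  have hmem : x ∈ X₀ := by
    have h0 : Tendsto (fun k => dist x (z k) + hausdorffDist (X (ν k)) X₀) atTop (nhds 0) := by
      have h1 : Tendsto (fun k => dist x (z k)) atTop (nhds 0) := by
        have := tendsto_iff_dist_tendsto_zero.mp hzx
        simpa [dist_comm] using this
      have h2 : Tendsto (fun k => hausdorffDist (X (ν k)) X₀) atTop (nhds 0) :=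
        hconv.comp hν.tendsto_atTop
      simpa using h1.add h2
    have hle : ∀ k, infDist x X₀ ≤ dist x (z k) + hausdorffDist (X (ν k)) X₀ := by
      intro k
      calc infDist x X₀ ≤ infDist (z k) X₀ + dist x (z k) := infDist_le_infDist_add_dist
        _ ≤ hausdorffDist (X (ν k)) X₀ + dist x (z k) := by
            gcongr
            exact infDist_le_hausdorffDist_of_mem (hz k)
              (aux_fin (X (ν k)) X₀ (hXne (ν k)) hX₀ne)
        _ = dist x (z k) + hausdorffDist (X (ν k)) X₀ := by ring
    have : infDist x X₀ ≤ 0 := ge_of_tendsto' h0 hle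
    have h00 : infDist x X₀ = 0 := le_antisymm this infDist_nonneg
    exact (hX₀c.isClosed.mem_iff_infDist_zero hX₀ne).mpr h00
  obtain ⟨a, ha, hax⟩ := aux_approx X X₀ hXc hXne hX₀ne hconv hmem
  set w : ℕ → B := fun m => if h : ∃ k, ν k = m then z h.choose else a m with hw
  have hwz : ∀ k, w (ν k) = z k := by
    intro k
    have h : ∃ j, ν j = ν k := ⟨k, rfl⟩
    simp only [hw, dif_pos h]
    exact congrArg z (hν.injective h.choose_spec)
  have hwmem : ∀ m, w m ∈ X m := by
    intro m
    by_cases h : ∃ k, ν k = m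
    · simp only [hw, dif_pos h]
      have := hz h.choose
      rw [h.choose_spec] at this
      exact this
    · simp only [hw, dif_neg h]
      exact ha m
  have hwt : Tendsto w atTop (nhds x) := by
    rw [Metric.tendsto_atTop]
    intro ε hε
    obtain ⟨K, hK⟩ := (Metric.tendsto_atTop.mp hzx) ε hε
    obtain ⟨M₀, hM₀⟩ := (Metric.tendsto_atTop.mp hax) ε hε
    refine ⟨max (ν K) M₀, fun m hm => ?_⟩
    by_cases h : ∃ k, ν k = m
    · have hwm : w m = z h.choose := by simp only [hw, dif_pos h]
      rw [hwm]
      apply hK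
      by_contra hlt
      push_neg at hlt
      have : ν h.choose < ν K := hν hlt
      rw [h.choose_spec] at this
      exact absurd (le_trans (le_max_left _ _) hm) (not_le.mpr this)
    · have hwm : w m = a m := by simp only [hw, dif_neg h]
      rw [hwm]
      exact hM₀ m (le_trans (le_max_right _ _) hm)
  refine ⟨hmem, ?_⟩
  have := (hlim x hmem w hwmem hwt).comp hν.tendsto_atTop
  have h2 : (fun k => f (ν k) (z k)) = ((fun n => f n (w n)) ∘ ν) := by
    funext k
    simp [Function.comp, hwz]
  rw [h2]
  exact this

lemma aux_dichot (ν : ℕ → ℕ) :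
    (∃ m, ∃ φ : ℕ → ℕ, StrictMono φ ∧ ∀ k, ν (φ k) = m) ∨
    (∃ φ : ℕ → ℕ, StrictMono φ ∧ StrictMono (ν ∘ φ)) := by
  by_cases h : ∃ m, ∃ᶠ k in atTop, ν k = m
  · obtain ⟨m, hm⟩ := h
    obtain ⟨φ, hφ, hφ2⟩ := Filter.extraction_of_frequently_atTop hm
    exact Or.inl ⟨m, φ, hφ, hφ2⟩
  · right
    push_neg at h
    have H : ∀ m, ∃ N, ∀ k ≥ N, ν k ≠ m := by
      intro m
      exact eventually_atTop.mp (h m)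
    choose Nf hNf using H
    have hT : Tendsto ν atTop atTop := by
      refine tendsto_atTop_atTop.mpr fun b => ⟨(Finset.range b).sup Nf, fun k hk => ?_⟩
      by_contra hb
      push_neg at hb
      exact hNf (ν k) k (le_trans (Finset.le_sup (Finset.mem_range.mpr hb)) hk) rfl
    exact strictMono_subseq_of_tendsto_atTop hT

end aux

/-- If `fₙ ∈ C(Xₙ)` and `fₙ ↣ g` across Hausdorff-converging compact domains,
then the family `(fₙ)` is uniformly bounded and equicontinuous, and `g` is
continuous on the limit set. -/
theorem stmt_13 {B : Type*} [MetricSpace B] [CompactSpace B]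
    (X : ℕ → Set B) (X₀ : Set B)
    (hXc : ∀ n, IsCompact (X n)) (hXne : ∀ n, (X n).Nonempty)
    (hX₀c : IsCompact X₀) (hX₀ne : X₀.Nonempty)
    (hconv : Tendsto (fun n => Metric.hausdorffDist (X n) X₀) atTop (nhds 0))
    (f : ℕ → B → ℝ) (hf : ∀ n, ContinuousOn (f n) (X n)) (g : B → ℝ)
    (hlim : ∀ x ∈ X₀, ∀ z : ℕ → B, (∀ n, z n ∈ X n) → Tendsto z atTop (nhds x) →
      Tendsto (fun n => f n (z n)) atTop (nhds (g x))) :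
    (∃ Mb : ℝ, ∀ n, ∀ x ∈ X n, |f n x| ≤ Mb) ∧
    (∀ ε > (0:ℝ), ∃ δ > (0:ℝ), ∀ n, ∀ x ∈ X n, ∀ y ∈ X n,
      dist x y < δ → |f n x - f n y| < ε) ∧
    ContinuousOn g X₀ := by
  have keyB := aux_keyB X X₀ hXc hXne hX₀c hX₀ne hconv f g hlim
  -- Uniform boundedness
  have hbdd : ∃ Mb : ℝ, ∀ n, ∀ x ∈ X n, |f n x| ≤ Mb := by
    by_contra hcon
    push_neg at hcon
    have hbad : ∀ k : ℕ, ∃ n, ∃ x ∈ X n, (k : ℝ) < |f n x| := fun k => hcon (k : ℝ)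
    choose ν x hx hfx using hbad
    rcases aux_dichot ν with ⟨m, φ, hφ, hφ2⟩ | ⟨φ, hφ, hφν⟩
    · obtain ⟨C, hC⟩ := (hXc m).exists_bound_of_continuousOn (hf m)
      set k := ⌈C⌉₊ + 1 with hk
      have h1 : (k : ℝ) < |f (ν (φ k)) (x (φ k))| :=
        lt_of_le_of_lt (by exact_mod_cast Nat.cast_le.mpr (hφ.le_apply)) (hfx (φ k))
      rw [hφ2 k] at h1
      have h2 : |f m (x (φ k))| ≤ C := by
        have := hC (x (φ k)) (by rw [← hφ2 k]; exact hx (φ k))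
        simpa [Real.norm_eq_abs] using this
      have : C < (k : ℝ) := by
        have := Nat.le_ceil C
        push_cast [hk]
        linarith
      linarith
    · obtain ⟨a, -, ψ, hψ, hψt⟩ := isCompact_univ.tendsto_subseq
        (fun k => Set.mem_univ (x (φ k)))
      obtain ⟨-, hft⟩ := keyB (ν ∘ φ ∘ ψ) (hφν.comp hψ) (fun k => x (φ (ψ k)))
        (fun k => hx (φ (ψ k))) hψt
      have habs : Tendsto (fun k => |f (ν (φ (ψ k))) (x (φ (ψ k)))|) atTop (nhds |g a|) :=
        hft.abs
      have hev : ∀ᶠ k in atTop, |f (ν (φ (ψ k))) (x (φ (ψ k)))| < |g a| + 1 :=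
        habs.eventually_lt_const (by linarith)
      obtain ⟨k, hk1, hk2⟩ := (hev.and (eventually_ge_atTop (⌈|g a| + 1⌉₊))).exists
      have h3 : (k : ℝ) < |f (ν (φ (ψ k))) (x (φ (ψ k)))| := by
        refine lt_of_le_of_lt ?_ (hfx (φ (ψ k)))
        exact_mod_cast le_trans (hψ.le_apply) (hφ.le_apply)
      have h4 : |g a| + 1 ≤ (k : ℝ) := le_trans (Nat.le_ceil _) (by exact_mod_cast hk2)
      linarith
  -- Equicontinuity
  have hequi : ∀ ε > (0:ℝ), ∃ δ > (0:ℝ), ∀ n, ∀ x ∈ X n, ∀ y ∈ X n,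
      dist x y < δ → |f n x - f n y| < ε := by
    by_contra hcon
    push_neg at hcon
    obtain ⟨ε, hε, hbad⟩ := hcon
    have hbad' : ∀ k : ℕ, ∃ n, ∃ x ∈ X n, ∃ y ∈ X n,
        dist x y < 1 / (k + 1) ∧ ε ≤ |f n x - f n y| := by
      intro k
      exact hbad (1 / (k + 1)) (by positivity)
    choose ν x hx y hy hdist hfd using hbad'
    rcases aux_dichot ν with ⟨m, φ, hφ, hφ2⟩ | ⟨φ, hφ, hφν⟩
    · obtain ⟨δ, hδ, hδ2⟩ := (Metric.uniformContinuousOn_iff.mp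
        ((hXc m).uniformContinuousOn_of_continuous (hf m))) ε hε
      obtain ⟨k, hk⟩ := exists_nat_one_div_lt hδ
      have hle : dist (x (φ k)) (y (φ k)) < δ := by
        refine lt_trans (lt_of_lt_of_le (hdist (φ k)) ?_) hk
        apply one_div_le_one_div_of_le (by positivity)
        exact_mod_cast Nat.add_le_add_right hφ.le_apply 1
      have h1 := hδ2 (x (φ k)) (by rw [← hφ2 k]; exact hx (φ k))
        (y (φ k)) (by rw [← hφ2 k]; exact hy (φ k)) hle
      have h2 := hfd (φ k)
      rw [hφ2 k] at h2
      rw [Real.dist_eq] at h1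
      linarith
    · obtain ⟨a, -, ψ, hψ, hψt⟩ := isCompact_univ.tendsto_subseq
        (fun k => Set.mem_univ (x (φ k)))
      have hyt : Tendsto (fun k => y (φ (ψ k))) atTop (nhds a) := by
        rw [tendsto_iff_dist_tendsto_zero]
        refine squeeze_zero
          (g := fun k => dist (y (φ (ψ k))) (x (φ (ψ k))) + dist (x (φ (ψ k))) a)
          (fun k => dist_nonneg) (fun k => dist_triangle _ _ _) ?_
        have h1 : Tendsto (fun k => dist (y (φ (ψ k))) (x (φ (ψ k)))) atTop (nhds 0) := by
          refine squeeze_zero (g := fun k : ℕ => 1 / ((k : ℝ) + 1))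
            (fun k => dist_nonneg) (fun k => ?_) tendsto_one_div_add_atTop_nhds_zero_nat
          rw [dist_comm]
          refine le_of_lt (lt_of_lt_of_le (hdist (φ (ψ k))) ?_)
          apply one_div_le_one_div_of_le (by positivity)
          exact_mod_cast Nat.add_le_add_right (le_trans hψ.le_apply hφ.le_apply) 1
        have h2 : Tendsto (fun k => dist (x (φ (ψ k))) a) atTop (nhds 0) :=
          tendsto_iff_dist_tendsto_zero.mp hψt
        simpa using h1.add h2
      obtain ⟨-, hft1⟩ := keyB (ν ∘ φ ∘ ψ) (hφν.comp hψ) (fun k => x (φ (ψ k)))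
        (fun k => hx (φ (ψ k))) hψt
      obtain ⟨-, hft2⟩ := keyB (ν ∘ φ ∘ ψ) (hφν.comp hψ) (fun k => y (φ (ψ k)))
        (fun k => hy (φ (ψ k))) hyt
      have hd0 : Tendsto (fun k => |f (ν (φ (ψ k))) (x (φ (ψ k))) -
          f (ν (φ (ψ k))) (y (φ (ψ k)))|) atTop (nhds 0) := by
        have := (hft1.sub hft2).abs
        simpa using this
      have : ε ≤ 0 := ge_of_tendsto' hd0 (fun k => hfd (φ (ψ k)))
      linarith
  refine ⟨hbdd, hequi, ?_⟩
  -- Continuity of g on X₀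
  rw [Metric.continuousOn_iff]
  intro b hb ε hε
  obtain ⟨δ, hδ, hδ2⟩ := hequi (ε / 2) (by linarith)
  refine ⟨δ / 2, by linarith, fun a ha hab => ?_⟩
  obtain ⟨z, hz, hzt⟩ := aux_approx X X₀ hXc hXne hX₀ne hconv ha
  obtain ⟨w, hw, hwt⟩ := aux_approx X X₀ hXc hXne hX₀ne hconv hb
  have hfz := hlim a ha z hz hzt
  have hfw := hlim b hb w hw hwt
  have hev : ∀ᶠ n in atTop, |f n (z n) - f n (w n)| ≤ ε / 2 := by
    have h1 : ∀ᶠ n in atTop, dist (z n) a < (δ / 2 - dist a b) / 2 := by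
      refine eventually_atTop.mpr ((Metric.tendsto_atTop.mp hzt) _ ?_)
      have : dist a b < δ / 2 := hab
      linarith
    have h2 : ∀ᶠ n in atTop, dist (w n) b < (δ / 2 - dist a b) / 2 := by
      refine eventually_atTop.mpr ((Metric.tendsto_atTop.mp hwt) _ ?_)
      have : dist a b < δ / 2 := hab
      linarith
    filter_upwards [h1, h2] with n h1 h2
    have hd : dist (z n) (w n) < δ := by
      calc dist (z n) (w n) ≤ dist (z n) a + dist a b + dist b (w n) :=
            dist_triangle4 _ _ _ _
        _ < (δ / 2 - dist a b) / 2 + dist a b + (δ / 2 - dist a b) / 2 := by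
            rw [dist_comm b (w n)]; linarith
        _ ≤ δ := by linarith [dist_nonneg (x := a) (y := b)]
    exact le_of_lt (hδ2 n (z n) (hz n) (w n) (hw n) hd)
  have hlim2 : Tendsto (fun n => |f n (z n) - f n (w n)|) atTop (nhds |g a - g b|) :=
    (hfz.sub hfw).abs
  have : |g a - g b| ≤ ε / 2 := le_of_tendsto hlim2 hev
  rw [Real.dist_eq]
  linarith
end

section
/- Let $X$ be a compact metric space, $\mathcal{E}, \mathcal{E}'$ two quadratic forms on a common domain $\mathcal{F}$ of functions on $X$ containing nonconstant functions, and suppose $\mathcal{E}(f) = 0$ iff $f$ is constant, likewise for $\mathcal{E}'$. Define $\sup(\mathcal{E}'|\mathcal{E}) = \sup\{\mathcal{E}'(f)/\mathcal{E}(f)\}$ and $\inf(\mathcal{E}'|\mathcal{E}) = \inf\{\mathcal{E}'(f)/\mathcal{E}(f)\}$ over nonconstant $f \in \mathcal{F}$, and suppose both lie in $(0, \infty)$. For $\eta > 0$ set $\mathcal{E}''(f) = (1+\eta)\mathcal{E}'(f) - \inf(\mathcal{E}'|\mathcal{E})\,\mathcal{E}(f)$. Then $\mathcal{E}''(f) >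 0$ for nonconstant $f$, and $\frac{\sup(\mathcal{E}''|\mathcal{E})}{\inf(\mathcal{E}''|\mathcal{E})} > \frac{1}{\eta}\left(\frac{\sup(\mathcal{E}'|\mathcal{E})}{\inf(\mathcal{E}'|\mathcal{E})} - 1\right)$. -/
/-- The quantitative inequality at the heart of the uniqueness argument: the
normalized difference form `E'' = (1+η)E' - inf(E'|E)·E` is positive on
nonconstant functions, and its comparison ratio blows up like `1/η`. -/
theorem stmt_15 {X : Type*} (F : Set (X → ℝ)) (E E' : (X → ℝ) → ℝ)
    (hne : ∃ f ∈ F, ¬∃ c : ℝ, ∀ x, f x = c)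
    (hE0 : ∀ f ∈ F, (E f = 0 ↔ ∃ c : ℝ, ∀ x, f x = c))
    (hE'0 : ∀ f ∈ F, (E' f = 0 ↔ ∃ c : ℝ, ∀ x, f x = c))
    (hEpos : ∀ f ∈ F, 0 ≤ E f) (hE'pos : ∀ f ∈ F, 0 ≤ E' f)
    (s i : ℝ)
    (hs : IsLUB {t : ℝ | ∃ f ∈ F, (¬∃ c : ℝ, ∀ x, f x = c) ∧ t = E' f / E f} s)
    (hi : IsGLB {t : ℝ | ∃ f ∈ F, (¬∃ c : ℝ, ∀ x, f x = c) ∧ t = E' f / E f} i)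
    (hipos : 0 < i)
    (η : ℝ) (hη : 0 < η)
    (E'' : (X → ℝ) → ℝ) (hE'' : ∀ f, E'' f = (1 + η) * E' f - i * E f)
    (s'' i'' : ℝ)
    (hs'' : IsLUB {t : ℝ | ∃ f ∈ F, (¬∃ c : ℝ, ∀ x, f x = c) ∧ t = E'' f / E f} s'')
    (hi'' : IsGLB {t : ℝ | ∃ f ∈ F, (¬∃ c : ℝ, ∀ x, f x = c) ∧ t = E'' f / E f} i'') :
    (∀ f ∈ F, (¬∃ c : ℝ, ∀ x, f x = c) → 0 < E'' f) ∧
      s'' / i'' > (1 / η) * (s / i - 1) := by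
  -- E f is positive on nonconstant f
  have hEf : ∀ f ∈ F, (¬∃ c : ℝ, ∀ x, f x = c) → 0 < E f := by
    intro f hf hnc
    rcases lt_or_eq_of_le (hEpos f hf) with h | h
    · exact h
    · exact absurd ((hE0 f hf).mp h.symm) hnc
  -- membership correspondence between the two ratio sets
  have hmem : ∀ f ∈ F, (¬∃ c : ℝ, ∀ x, f x = c) →
      E'' f / E f = (1 + η) * (E' f / E f) - i := by
    intro f hf hnc
    have hE := (hEf f hf hnc).ne'
    rw [hE'' f]
    field_simp
  have hratio_ge : ∀ f ∈ F, (¬∃ c : ℝ, ∀ x, f x = c) → i ≤ E' f / E f := by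
    intro f hf hnc
    exact hi.1 ⟨f, hf, hnc, rfl⟩
  -- positivity of E''
  have hpos : ∀ f ∈ F, (¬∃ c : ℝ, ∀ x, f x = c) → 0 < E'' f := by
    intro f hf hnc
    have h1 : 0 < E f := hEf f hf hnc
    have h2 : i ≤ E' f / E f := hratio_ge f hf hnc
    have h3 : i * E f ≤ E' f := (le_div_iff₀ h1).mp h2
    rw [hE'' f]
    nlinarith [mul_pos hipos h1]
  refine ⟨hpos, ?_⟩
  -- the two sets and their affine relation
  set S : Set ℝ := {t : ℝ | ∃ f ∈ F, (¬∃ c : ℝ, ∀ x, f x = c) ∧ t = E' f / E f} with hS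
  set S'' : Set ℝ := {t : ℝ | ∃ f ∈ F, (¬∃ c : ℝ, ∀ x, f x = c) ∧ t = E'' f / E f}
    with hS''
  have himg : S'' = (fun t => (1 + η) * t - i) '' S := by
    ext t
    constructor
    · rintro ⟨f, hf, hnc, rfl⟩
      exact ⟨E' f / E f, ⟨f, hf, hnc, rfl⟩, (hmem f hf hnc).symm⟩
    · rintro ⟨u, ⟨f, hf, hnc, rfl⟩, rfl⟩
      exact ⟨f, hf, hnc, (hmem f hf hnc).symm⟩
  have h1η : (0:ℝ) < 1 + η := by linarith
  -- s'' = (1+η) s - i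
  have hsval : s'' = (1 + η) * s - i := by
    refine hs''.unique ?_
    rw [himg]
    constructor
    · rintro t ⟨u, hu, rfl⟩
      have := hs.1 hu
      dsimp only
      nlinarith
    · intro b hb
      have hub : s ≤ (b + i) / (1 + η) := by
        apply hs.2
        intro u hu
        have := hb ⟨u, hu, rfl⟩
        dsimp only at this
        rw [le_div_iff₀ h1η]
        nlinarith
      rw [le_div_iff₀ h1η] at hub
      nlinarith
  -- i'' = η i
  have hival : i'' = η * i := by
    refine hi''.unique ?_
    rw [himg]
    constructor
    · rintro t ⟨u, hu, rfl⟩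
      have := hi.1 hu
      dsimp only
      nlinarith
    · intro b hb
      have hlb : (b + i) / (1 + η) ≤ i := by
        apply hi.2
        intro u hu
        have := hb ⟨u, hu, rfl⟩
        dsimp only at this
        rw [div_le_iff₀ h1η]
        nlinarith
      rw [div_le_iff₀ h1η] at hlb
      nlinarith
  -- s ≥ i > 0 since S is nonempty
  obtain ⟨f0, hf0, hnc0⟩ := hne
  have hmem0 : E' f0 / E f0 ∈ S := ⟨f0, hf0, hnc0, rfl⟩
  have hsi : i ≤ s := le_trans (hi.1 hmem0) (hs.1 hmem0)
  have hspos : 0 < s := lt_of_lt_of_le hipos hsi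
  rw [hsval, hival]
  have hηi : (0:ℝ) < η * i := by positivity
  have heq : (1 / η) * (s / i - 1) = (s - i) / (η * i) := by
    field_simp
  rw [gt_iff_lt, heq, div_lt_div_iff₀ hηi hηi]
  nlinarith [mul_pos hηi (mul_pos hη hspos)]
end

section
/- Let $u \in C[0,1]$, $k \ge 3$, and for each $n \ge 0$ define $D_n(u) = \left(\sum_{l=0}^{k^n - 1}(u(l/k^n) - u((l+1)/k^n))^2\right)^{1/2}$. Let $f : \{(x_1, x_2)\} \to \mathbb{R}$ be a continuous function on the closure of the countable set $V = \bigcup_{m\ge0}\{(l/k^m, k^{-(m+1)}) : 0 \le l \le k^m\} \subset [0,1]^2$, and define $\tilde D_m(f)$ to include, among other terms, $\left(\sum_{l}(f(l/k^m, k^{-(m+1)}) - f((l+1)/k^m, k^{-(m+1)}))^2\right)^{1/2}$ and the vertical differences $\left(\sum_l (f(l/k^m, k^{-(m+2)}) - f(l/k^m, k^{-(m+1)}))^2\right)^{1/2}$ at both endpoints of level-$n$ intervals. Then the boundary trace $u(x) = f(x, 0)$ satisfies $D_n(u) \le 3 \sum_{m=n}^{\infty} \tilde D_m(f)$ for every $n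 \ge 0$, via the telescoping identity $f(l/k^n, 0) = f(l/k^n, k^{-(n+1)}) + \sum_{m=n}^\infty (f(l/k^n, k^{-(m+2)}) - f(l/k^n, k^{-(m+1)}))$ and the triangle inequality in $\ell^2$. -/
/-!
With `u(x) = f(x, 0)` and `h = k^{-(n+1)}`, go from `u(l/kⁿ)` to `u((l+1)/kⁿ)` via `f(l/kⁿ, h)` and
`f((l+1)/kⁿ, h)`: by the triangle inequality in `ℓ²` it suffices to bound three columns by
`∑_{m ≥ n} D̃ₘ(f)`. The horizontal one is `D̃ₙ(f)`. The two vertical ones are sub-columns of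
`(u(l/kⁿ) - f(l/kⁿ, h))_{l ≤ kⁿ}`, which telescopes along the heights `k^{-(m+1)} → 0`;
continuity of `f` bounds it by the sum of the vertical steps `D̃ₘ(f)`, `m ≥ n`.
-/

open Finset Filter Topology

noncomputable def rangeVec (N : ℕ) (g : ℕ → ℝ) : EuclideanSpace ℝ (Fin N) :=
  WithLp.toLp 2 fun i => g i

lemma dist_rangeVec (N : ℕ) (g g' : ℕ → ℝ) :
    dist (rangeVec N g) (rangeVec N g') = Real.sqrt (∑ l ∈ range N, (g l - g' l) ^ 2) := by
  rw [EuclideanSpace.dist_eq, Finset.sum_range fun l => (g l - g' l) ^ 2]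
  simp [rangeVec, Real.dist_eq, sq_abs]

lemma sqrt_sum_sq_range_shift_le (g : ℕ → ℝ) {a N M : ℕ} (h : a + N ≤ M) :
    Real.sqrt (∑ l ∈ range N, g (a + l) ^ 2) ≤ Real.sqrt (∑ l ∈ range M, g l ^ 2) := by
  refine Real.sqrt_le_sqrt ?_
  rw [← Nat.add_sub_cancel_left (n := a) (m := N), ← Finset.sum_Ico_eq_sum_range fun l => g l ^ 2]
  exact Finset.sum_le_sum_of_subset_of_nonneg
    (fun l hl => Finset.mem_range.2 (by simp only [Finset.mem_Ico] at hl; omega))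
    fun l _ _ => sq_nonneg (g l)

lemma sqrt_sum_sq_sub_le_tsum_of_tendsto {f : ℝ × ℝ → ℝ} (hf : Continuous f) (x : ℕ → ℝ)
    (N : ℕ) {y : ℕ → ℝ} (hy : Tendsto y atTop (𝓝 0)) {t : ℕ → ℝ} (ht : Summable t)
    (hstep : ∀ j, Real.sqrt (∑ l ∈ range N, (f (x l, y (j + 1)) - f (x l, y j)) ^ 2) ≤ t j) :
    Real.sqrt (∑ l ∈ range N, (f (x l, 0) - f (x l, y 0)) ^ 2) ≤ ∑' j, t j := by
  set v : ℝ → EuclideanSpace ℝ (Fin N) := fun s => rangeVec N fun l => f (x l, s)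
  have hv : Continuous v :=
    (PiLp.continuous_toLp 2 _).comp (continuous_pi fun _ => hf.comp (Continuous.prodMk_right _))
  have hsteps : ∀ j, dist (v (y j)) (v (y j.succ)) ≤ t j := fun j => by
    rw [dist_comm, dist_rangeVec]
    exact hstep j
  rw [← dist_rangeVec, dist_comm]
  exact dist_le_tsum_of_dist_le_of_tendsto₀ t hsteps ht ((hv.tendsto 0).comp hy)

lemma tendsto_one_div_pow_add_atTop {k : ℝ} (hk : 1 < k) (n : ℕ) :
    Tendsto (fun j : ℕ => 1 / k ^ (n + j + 1)) atTop (𝓝 0) := by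
  have hlim := (tendsto_pow_atTop_nhds_zero_of_lt_one (by positivity) ((div_lt_one
    (by positivity)).2 hk)).comp (tendsto_add_atTop_nat (n + 1))
  refine hlim.congr fun j => ?_
  simp only [Function.comp_apply, one_div_pow]
  ring

/-- Lemma 6.13: boundary increments of a continuous function on the closed
infinite boundary graph are controlled by the tail sum of the graph increments:
`Dₙ(u) ≤ 3 ∑_{m ≥ n} D̃ₘ(f)`, where `u(x) = f(x,0)`. -/
theorem stmt_16 (k : ℕ) (hk : 3 ≤ k) (f : ℝ × ℝ → ℝ) (hf : Continuous f)
    (tD : ℕ → ℝ) (htD0 : ∀ m, 0 ≤ tD m) (htDsum : Summable tD)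
    (hhor : ∀ m : ℕ, Real.sqrt (∑ l ∈ Finset.range (k ^ m),
        (f ((l : ℝ) / (k : ℝ) ^ m, 1 / (k : ℝ) ^ (m + 1)) -
          f (((l : ℝ) + 1) / (k : ℝ) ^ m, 1 / (k : ℝ) ^ (m + 1))) ^ 2) ≤ tD m)
    (hver : ∀ n m : ℕ, n ≤ m → Real.sqrt (∑ l ∈ Finset.range (k ^ n + 1),
        (f ((l : ℝ) / (k : ℝ) ^ n, 1 / (k : ℝ) ^ (m + 2)) -
          f ((l : ℝ) / (k : ℝ) ^ n, 1 / (k : ℝ) ^ (m + 1))) ^ 2) ≤ tD m) :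
    ∀ n : ℕ, Real.sqrt (∑ l ∈ Finset.range (k ^ n),
        (f ((l : ℝ) / (k : ℝ) ^ n, 0) - f (((l : ℝ) + 1) / (k : ℝ) ^ n, 0)) ^ 2) ≤
      3 * ∑' m : ℕ, tD (n + m) := by
  intro n
  set S := ∑' m : ℕ, tD (n + m)
  set h : ℝ := 1 / (k : ℝ) ^ (n + 1)
  have htail : Summable fun m => tD (n + m) := htDsum.comp_injective (add_right_injective n)
  have hvert : Real.sqrt (∑ l ∈ range (k ^ n + 1),
      (f ((l : ℝ) / (k : ℝ) ^ n, 0) - f ((l : ℝ) / (k : ℝ) ^ n, h)) ^ 2) ≤ S :=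
    sqrt_sum_sq_sub_le_tsum_of_tendsto hf _ _
      (tendsto_one_div_pow_add_atTop (by exact_mod_cast (by omega : 1 < k)) n)
      htail fun j => hver n (n + j) (Nat.le_add_right n j)
  have hhorS : tD n ≤ S := htail.le_tsum 0 fun j _ => htD0 (n + j)
  set u₀ := rangeVec (k ^ n) fun l => f ((l : ℝ) / (k : ℝ) ^ n, 0)
  set u₁ := rangeVec (k ^ n) fun l => f (((l : ℝ) + 1) / (k : ℝ) ^ n, 0)
  set w₀ := rangeVec (k ^ n) fun l => f ((l : ℝ) / (k : ℝ) ^ n, h)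
  set w₁ := rangeVec (k ^ n) fun l => f (((l : ℝ) + 1) / (k : ℝ) ^ n, h)
  have hleft : dist u₀ w₀ ≤ S := by
    rw [dist_rangeVec]
    simpa using
      (sqrt_sum_sq_range_shift_le _ (a := 0) (N := k ^ n) (M := k ^ n + 1) (by omega)).trans hvert
  have hright : dist w₁ u₁ ≤ S := by
    rw [dist_comm, dist_rangeVec]
    simpa [add_comm] using
      (sqrt_sum_sq_range_shift_le _ (a := 1) (N := k ^ n) (M := k ^ n + 1) (by omega)).trans hvert
  calc Real.sqrt (∑ l ∈ range (k ^ n),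
        (f ((l : ℝ) / (k : ℝ) ^ n, 0) - f (((l : ℝ) + 1) / (k : ℝ) ^ n, 0)) ^ 2)
      = dist u₀ u₁ := (dist_rangeVec _ _ _).symm
    _ ≤ dist u₀ w₀ + dist w₀ w₁ + dist w₁ u₁ := dist_triangle4 _ _ _ _
    _ ≤ S + S + S := by
        gcongr
        rw [dist_rangeVec]
        exact (hhor n).trans hhorS
    _ = 3 * S := by ring
end
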